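/- Let λ > 0 and let (A_i)_{i≥1} be i.i.d. strictly positive random variables with mean 1/λ and finite variance σ² ∈ (0,∞). Let α ∈ (0,1), let (ρ_N)_{N≥1} ⊆ (0,1) satisfy √N·ρ_N → ∞ as N → ∞, and set U_N = √(N·σ²/α). Consider the threshold test that rejects H₀ exactly when the observed sum of N inter-arrival times is below N/λ − U_N. Then: (i) for every N, P( Σ_{i=1}^{N} A_i < N/λ − U_N ) ≤ α (false-alarm probability at most α); and (ii) lim_{N→∞} P( (1−ρ_N)·Σ_{i=1}^{N} A_i ≥ N/λ − U_N ) = 0 (missed-detection probability tends to 0). Hence if Alice inserts ω(√N) covert packets — which compresses the inter-arrival times by the factor (1−ρ_N) with ρ_N = ω(1/√N) — Willie can detect her with arbitrarily small P_FA + P_MD. -/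

import Mathlib

open MeasureTheory ProbabilityTheory Filter
open scoped ENNReal

/-!
Under `H₀` the sum `S_N` has mean `N / λ` and variance `N σ²`, so the threshold `N / λ - U_N`
lies `1 / √α` standard deviations below the mean and Chebyshev's inequality bounds the
false-alarm probability by `α`. Under `H₁` the event `(1 - ρ_N) S_N ≥ N / λ - U_N` forces `S_N`
to exceed its mean by `c_N = N ρ_N / λ - U_N = √N (√N ρ_N / λ - σ / √α)`, which eventually
dominates the standard deviation `√N σ`; Chebyshev then bounds the missed-detection
probability by `σ² / (√N ρ_N / λ - σ / √α)² → 0`.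
-/

lemma Real.sqrt_mul_sq_div {N : ℝ} (hN : 0 ≤ N) (σ α : ℝ) :
    √(N * σ ^ 2 / α) = √N * (|σ| / √α) := by
  rw [mul_div_assoc, Real.sqrt_mul hN, Real.sqrt_div (sq_nonneg σ), Real.sqrt_sq_eq_abs]

namespace ProbabilityTheory

variable {Ω : Type*} {mΩ : MeasurableSpace Ω} {μ : Measure Ω}

section Chebyshev

variable [IsFiniteMeasure μ] {X : Ω → ℝ}

lemma measure_integral_add_le_le_variance_div_sq (hX : MemLp X 2 μ) {c : ℝ} (hc : 0 < c) :
    μ {ω | μ[X] + c ≤ X ω} ≤ ENNReal.ofReal (Var[X; μ] / c ^ 2) :=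
  (measure_mono fun ω (hω : μ[X] + c ≤ X ω) ↦
    show c ≤ |X ω - μ[X]| from (le_sub_iff_add_le'.2 hω).trans (le_abs_self _)).trans
    (meas_ge_le_variance_div_sq hX hc)

lemma measure_lt_integral_sub_sqrt_variance_div_le (hX : MemLp X 2 μ) {α : ℝ} (hα : 0 < α) :
    μ {ω | X ω < μ[X] - √(Var[X; μ] / α)} ≤ ENNReal.ofReal α := by
  rcases variance_nonneg X μ |>.eq_or_lt with hvar | hvar
  · refine (measure_mono_null (fun ω hω ↦ ?_)
      (ae_iff.1 (ae_eq_integral_of_variance_eq_zero hX hvar.symm))).trans_le zero_le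
    simp only [← hvar, zero_div, Real.sqrt_zero, sub_zero, Set.mem_ofPred_eq] at hω ⊢
    exact hω.ne
  · set c := √(Var[X; μ] / α)
    have hc : 0 < c := Real.sqrt_pos.2 (div_pos hvar hα)
    have hc2 : Var[X; μ] / c ^ 2 = α := by
      rw [Real.sq_sqrt (div_pos hvar hα).le, div_div_cancel₀ hvar.ne']
    calc μ {ω | X ω < μ[X] - c} ≤ μ {ω | c ≤ |X ω - μ[X]|} := measure_mono fun ω hω ↦ by
            rw [Set.mem_ofPred_eq, abs_sub_comm]
            exact (lt_sub_comm.1 hω).le.trans (le_abs_self _)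
      _ ≤ ENNReal.ofReal α := hc2 ▸ meas_ge_le_variance_div_sq hX hc

end Chebyshev

section IidSum

variable {X : ℕ → Ω → ℝ}

lemma integral_sum_range_of_identDistrib (hident : ∀ i, IdentDistrib (X i) (X 0) μ μ)
    (hint : Integrable (X 0) μ) (N : ℕ) :
    μ[fun ω ↦ ∑ i ∈ Finset.range N, X i ω] = (N : ℝ) * μ[X 0] := by
  rw [integral_finsetSum _ fun i _ ↦ (hident i).integrable_iff.2 hint]
  simp [fun i ↦ (hident i).integral_eq]

lemma variance_sum_range_of_identDistrib (hindep : iIndepFun X μ)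
    (hident : ∀ i, IdentDistrib (X i) (X 0) μ μ) (hX : MemLp (X 0) 2 μ) (N : ℕ) :
    Var[fun ω ↦ ∑ i ∈ Finset.range N, X i ω; μ] = (N : ℝ) * Var[X 0; μ] := by
  simp_rw [← Finset.sum_apply]
  rw [IndepFun.variance_sum (fun i _ ↦ (hident i).symm.memLp_snd hX)
    fun i _ j _ hij ↦ hindep.indepFun hij]
  simp [fun i ↦ (hident i).variance_eq]

end IidSum

section Compressed

variable [IsFiniteMeasure μ] {S : ℕ → Ω → ℝ} {lam σ α : ℝ} {ρ : ℕ → ℝ}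

lemma tendsto_measure_threshold_le_one_sub_mul (hS : ∀ N, MemLp (S N) 2 μ)
    (hmean : ∀ N : ℕ, μ[S N] = N / lam) (hvar : ∀ N : ℕ, Var[S N; μ] = N * σ ^ 2)
    (hlam : 0 < lam) (hρ : ∀ N, ρ N ∈ Set.Ioo (0 : ℝ) 1)
    (hρω : Tendsto (fun N : ℕ ↦ √N * ρ N) atTop atTop) :
    Tendsto (fun N : ℕ ↦ μ {ω | N / lam - √(N * σ ^ 2 / α) ≤ (1 - ρ N) * S N ω})
      atTop (nhds 0) := by
  set g : ℕ → ℝ := fun N ↦ √N * ρ N / lam - |σ| / √α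
  have hg : Tendsto g atTop atTop := tendsto_atTop_add_const_right _ _ (hρω.atTop_div_const hlam)
  have hlim : Tendsto (fun N ↦ ENNReal.ofReal (σ ^ 2 / g N ^ 2)) atTop (nhds 0) := by
    simpa using ENNReal.tendsto_ofReal
      (tendsto_const_nhds.div_atTop (by simpa [sq] using hg.atTop_mul_atTop₀ hg))
  refine tendsto_of_tendsto_of_tendsto_of_le_of_le' tendsto_const_nhds hlim
    (.of_forall fun _ ↦ zero_le) ?_
  filter_upwards [eventually_gt_atTop 0, hg.eventually_gt_atTop 0] with N hN hgN
  obtain ⟨hρ0, hρ1⟩ := hρ N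
  have hNpos : (0 : ℝ) < N := Nat.cast_pos.2 hN
  set c := √N * g N
  have hc : 0 < c := mul_pos (Real.sqrt_pos.2 hNpos) hgN
  have hthreshold : N / lam - √(N * σ ^ 2 / α) = (1 - ρ N) * (N / lam) + c := by
    simp only [c, g]
    rw [Real.sqrt_mul_sq_div hNpos.le]
    linear_combination (-ρ N / lam) * Real.sq_sqrt hNpos.le
  calc μ {ω | N / lam - √(N * σ ^ 2 / α) ≤ (1 - ρ N) * S N ω}
      ≤ μ {ω | μ[S N] + c ≤ S N ω} := measure_mono fun ω hω ↦ by
        simp only [Set.mem_ofPred_eq, hthreshold, hmean] at hω ⊢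
        -- `(1 - ρ) * c ≤ c` and `0 < 1 - ρ`
        nlinarith
    _ ≤ ENNReal.ofReal (Var[S N; μ] / c ^ 2) := measure_integral_add_le_le_variance_div_sq (hS N) hc
    _ = ENNReal.ofReal (σ ^ 2 / g N ^ 2) := by
      rw [hvar, mul_pow, Real.sq_sqrt hNpos.le, mul_div_mul_left _ _ hNpos.ne']

end Compressed

end ProbabilityTheory

theorem stmt_11_general {Ω : Type*} [MeasureSpace Ω] [IsProbabilityMeasure (ℙ : Measure Ω)]
    (lam σ : ℝ) (hlam : 0 < lam)
    (A : ℕ → Ω → ℝ)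
    (hindep : iIndepFun A ℙ)
    (hident : ∀ i, IdentDistrib (A i) (A 0) ℙ ℙ)
    (hL2 : MemLp (A 0) 2 ℙ)
    (hmean : ∫ ω, A 0 ω ∂(ℙ : Measure Ω) = 1 / lam)
    (hvar : variance (A 0) ℙ = σ ^ 2)
    (α : ℝ) (hα : α ∈ Set.Ioo (0:ℝ) 1)
    (ρ : ℕ → ℝ) (hρ : ∀ N, ρ N ∈ Set.Ioo (0:ℝ) 1)
    (hρω : Tendsto (fun N : ℕ => Real.sqrt N * ρ N) atTop atTop)
    (U : ℕ → ℝ) (hU : ∀ N, U N = Real.sqrt (N * σ ^ 2 / α)) :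
    (∀ N : ℕ,
        (ℙ : Measure Ω) {ω | ∑ i ∈ Finset.range N, A i ω < (N : ℝ) / lam - U N} ≤
          ENNReal.ofReal α) ∧
      Tendsto
        (fun N : ℕ =>
          (ℙ : Measure Ω)
            {ω | (N : ℝ) / lam - U N ≤ (1 - ρ N) * ∑ i ∈ Finset.range N, A i ω})
        atTop (nhds 0) := by
  obtain rfl : U = fun N : ℕ ↦ √(N * σ ^ 2 / α) := funext hU
  have hL2S (N : ℕ) : MemLp (fun ω ↦ ∑ i ∈ Finset.range N, A i ω) 2 ℙ :=
    memLp_finsetSum _ fun i _ ↦ (hident i).symm.memLp_snd hL2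
  have hmeanS (N : ℕ) : ℙ[fun ω ↦ ∑ i ∈ Finset.range N, A i ω] = N / lam := by
    rw [integral_sum_range_of_identDistrib hident (hL2.integrable one_le_two), hmean,
      mul_one_div]
  have hvarS (N : ℕ) : Var[fun ω ↦ ∑ i ∈ Finset.range N, A i ω; ℙ] = N * σ ^ 2 := by
    rw [variance_sum_range_of_identDistrib hindep hident hL2, hvar]
  refine ⟨fun N ↦ ?_, tendsto_measure_threshold_le_one_sub_mul hL2S hmeanS hvarS hlam hρ hρω⟩
  simpa only [hmeanS, hvarS] using measure_lt_integral_sub_sqrt_variance_div_le (hL2S N) hα.1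

/-- converse for packet insertion: Let `(A i)` be i.i.d., strictly
positive, with mean `1/λ` and variance `σ² ∈ (0,∞)`.  Let `α ∈ (0,1)`, `ρ_N ∈ (0,1)`
with `√N·ρ_N → ∞`, and `U_N = √(Nσ²/α)`.  Then the threshold test that rejects `H₀`
when the sum of `N` inter-arrival times is below `N/λ − U_N` has false-alarm
probability at most `α` for every `N`, and missed-detection probability (under the
compressed alternative, where the sum is `(1−ρ_N)·Σ A_i`) tending to `0`. -/
theorem stmt_11 {Ω : Type*} [MeasureSpace Ω] [IsProbabilityMeasure (ℙ : Measure Ω)]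
    (lam σ : ℝ) (hlam : 0 < lam) (hσ : 0 < σ)
    (A : ℕ → Ω → ℝ)
    (hmeas : ∀ i, Measurable (A i))
    (hindep : iIndepFun A ℙ)
    (hident : ∀ i, IdentDistrib (A i) (A 0) ℙ ℙ)
    (hpos : ∀ i, ∀ᵐ ω ∂(ℙ : Measure Ω), 0 < A i ω)
    (hL2 : MemLp (A 0) 2 ℙ)
    (hmean : ∫ ω, A 0 ω ∂(ℙ : Measure Ω) = 1 / lam)
    (hvar : variance (A 0) ℙ = σ ^ 2)
    (α : ℝ) (hα : α ∈ Set.Ioo (0:ℝ) 1)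
    (ρ : ℕ → ℝ) (hρ : ∀ N, ρ N ∈ Set.Ioo (0:ℝ) 1)
    (hρω : Tendsto (fun N : ℕ => Real.sqrt N * ρ N) atTop atTop)
    (U : ℕ → ℝ) (hU : ∀ N, U N = Real.sqrt (N * σ ^ 2 / α)) :
    (∀ N : ℕ,
        (ℙ : Measure Ω) {ω | ∑ i ∈ Finset.range N, A i ω < (N : ℝ) / lam - U N} ≤
          ENNReal.ofReal α) ∧
      Tendsto
        (fun N : ℕ =>
          (ℙ : Measure Ω)
            {ω | (N : ℝ) / lam - U N ≤ (1 - ρ N) * ∑ i ∈ Finset.range N, A i ω})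
        atTop (nhds 0) :=
  stmt_11_general lam σ hlam A hindep hident hL2 hmean hvar α hα ρ hρ hρω U hU
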